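/- arXiv:2206.13374 — 5 statements merged into one kernel-verified Lean document; each statement's English description precedes it below -/
import Mathlib

section
/- If ψ₁ : X₁ → U₁ and ψ₂ : X₂ → U₂ are functions with X₁ ⊆ ℝⁿ, U₁ ⊆ ℝᵐ, X₂ ⊆ ℝᵐ, U₂ ⊆ ℝᵒ, X₂ ⊇ U₁, and both ψ₁ and ψ₂ are MILP representable, then the composition ψ₂ ∘ ψ₁ : X₁ → U₂ is MILP representable. -/
/-!
The intermediate value `y = ψ₁ x` becomes one more continuous auxiliary variable: the composite
is described by the variables `(x, u, (y, z₁, z₂), (β₁, β₂))` subject to the constraints of `ψ₁`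
on `(x, y, z₁, β₁)` and those of `ψ₂` on `(y, u, z₂, β₂)`. For `x ∈ X₁` the first system forces
`y = ψ₁ x`, which lies in `X₂`, and then the second forces `u = ψ₂ y`.
-/

/-- A function `ψ` defined on a domain `X ⊆ ℝⁿ` with values in `ℝᵐ` is MILP representable
if there are nonnegative integers `c`, `b` and a polyhedron `P = {w : M w ≤ d}` in
`ℝ^(n+m+c+b)` such that for all `x ∈ X` and `u`, `u = ψ x` iff there exist `z ∈ ℝᶜ` and
binary `β ∈ {0,1}ᵇ` with `(x, u, z, β) ∈ P`. -/
def MILPRepresentable {n m : ℕ} (X : Set (Fin n → ℝ))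
    (ψ : (Fin n → ℝ) → (Fin m → ℝ)) : Prop :=
  ∃ (c b k : ℕ) (M : Matrix (Fin k) (Fin (n + m + c + b)) ℝ) (d : Fin k → ℝ),
    ∀ x ∈ X, ∀ u : Fin m → ℝ,
      u = ψ x ↔ ∃ (z : Fin c → ℝ) (β : Fin b → ℝ),
        (∀ j, β j = 0 ∨ β j = 1) ∧
        M.mulVec (Fin.append (Fin.append (Fin.append x u) z) β) ≤ d

open Matrix

theorem Fin.exists_iff_exists_append {α : Type*} {m n : ℕ} {P : (Fin (m + n) → α) → Prop} :
    (∃ v, P v) ↔ ∃ a b, P (Fin.append a b) :=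
  (Fin.appendEquiv m n).surjective.exists.trans Prod.exists

theorem Matrix.exists_fin_mulVec_le_iff {R ι ν : Type*} [NonUnitalNonAssocSemiring R] [LE R]
    [Fintype ι] [Fintype ν] (M : Matrix ι ν R) (d : ι → R) :
    ∃ (k : ℕ) (M' : Matrix (Fin k) ν R) (d' : Fin k → R), ∀ w, M' *ᵥ w ≤ d' ↔ M *ᵥ w ≤ d := by
  let e := (Fintype.equivFin ι).symm
  refine ⟨_, M.submatrix e id, d ∘ e, fun w => ?_⟩
  exact (e.surjective.forall (p := fun i => (M *ᵥ w) i ≤ d i)).symm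

theorem Matrix.mulVec_comp {R ι κ ν : Type*} [CommSemiring R] [Fintype κ] [Fintype ν]
    [DecidableEq ν] (A : Matrix ι κ R) (p : κ → ν) (w : ν → R) :
    A *ᵥ (w ∘ p) = (A * LinearMap.toMatrix' (LinearMap.funLeft R R p)) *ᵥ w := by
  rw [← mulVec_mulVec, LinearMap.toMatrix'_mulVec]
  rfl

theorem Matrix.exists_mulVec_le_iff_and_comp {R ι₁ ι₂ κ₁ κ₂ ν : Type*} [CommSemiring R] [LE R]
    [Fintype ι₁] [Fintype ι₂] [Fintype κ₁] [Fintype κ₂] [Fintype ν] [DecidableEq ν]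
    (A₁ : Matrix ι₁ κ₁ R) (d₁ : ι₁ → R) (p₁ : κ₁ → ν)
    (A₂ : Matrix ι₂ κ₂ R) (d₂ : ι₂ → R) (p₂ : κ₂ → ν) :
    ∃ (k : ℕ) (M : Matrix (Fin k) ν R) (d : Fin k → R), ∀ w,
      M *ᵥ w ≤ d ↔ A₁ *ᵥ (w ∘ p₁) ≤ d₁ ∧ A₂ *ᵥ (w ∘ p₂) ≤ d₂ := by
  obtain ⟨k, M, d, hM⟩ := exists_fin_mulVec_le_iff
    (fromRows (A₁ * LinearMap.toMatrix' (LinearMap.funLeft R R p₁))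
      (A₂ * LinearMap.toMatrix' (LinearMap.funLeft R R p₂))) (Sum.elim d₁ d₂)
  refine ⟨k, M, d, fun w => ?_⟩
  rw [hM, fromRows_mulVec, Sum.elim_le_elim_iff, mulVec_comp, mulVec_comp]

theorem eq_comp_iff_exists_of_eq_iff {α β γ : Type*} {f : α → β} {g : β → γ} {s : Set α}
    {t : Set β} {R₁ : α → β → Prop} {R₂ : β → γ → Prop}
    (h₁ : ∀ x ∈ s, ∀ y, y = f x ↔ R₁ x y) (h₂ : ∀ y ∈ t, ∀ u, u = g y ↔ R₂ y u)
    (hst : f '' s ⊆ t) {x : α} (hx : x ∈ s) (u : γ) :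
    u = g (f x) ↔ ∃ y, R₁ x y ∧ R₂ y u := by
  have hfx : f x ∈ t := hst ⟨x, hx, rfl⟩
  constructor
  · rintro rfl
    exact ⟨f x, (h₁ x hx _).1 rfl, (h₂ _ hfx _).1 rfl⟩
  · rintro ⟨y, hy, hu⟩
    obtain rfl := (h₁ x hx y).2 hy
    exact (h₂ _ hfx u).2 hu

open Fin in
theorem exists_composite_constraints {n m o c₁ c₂ b₁ b₂ k₁ k₂ : ℕ}
    (M₁ : Matrix (Fin k₁) (Fin (n + m + c₁ + b₁)) ℝ) (d₁ : Fin k₁ → ℝ)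
    (M₂ : Matrix (Fin k₂) (Fin (m + o + c₂ + b₂)) ℝ) (d₂ : Fin k₂ → ℝ) :
    ∃ (k : ℕ) (M : Matrix (Fin k) (Fin (n + o + (m + c₁ + c₂) + (b₁ + b₂))) ℝ)
      (d : Fin k → ℝ), ∀ x u y z₁ z₂ β₁ β₂,
      M *ᵥ append (append (append x u) (append (append y z₁) z₂)) (append β₁ β₂) ≤ d ↔
        M₁ *ᵥ append (append (append x y) z₁) β₁ ≤ d₁ ∧
        M₂ *ᵥ append (append (append y u) z₂) β₂ ≤ d₂ := by
  obtain ⟨k, M, d, hM⟩ := exists_mulVec_le_iff_and_comp M₁ d₁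
    (append (append (append (fun i => castAdd _ (castAdd _ (castAdd _ i)))
      (fun i => castAdd _ (natAdd _ (castAdd _ (castAdd _ i)))))
      (fun i => castAdd _ (natAdd _ (castAdd _ (natAdd _ i)))))
      (fun i => natAdd _ (castAdd _ i)))
    M₂ d₂
    (append (append (append (fun i => castAdd _ (natAdd _ (castAdd _ (castAdd _ i))))
      (fun i => castAdd _ (castAdd _ (natAdd _ i))))
      (fun i => castAdd _ (natAdd _ (natAdd _ i))))
      (fun i => natAdd _ (natAdd _ i)))
  refine ⟨k, M, d, fun x u y z₁ z₂ β₁ β₂ => ?_⟩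
  rw [hM]
  congr! 3 <;> simp [funext_iff, Fin.forall_fin_add]

/-- Composition of MILP representable functions is MILP representable. -/
theorem composition_MILP_representable {n m o : ℕ}
    (X₁ : Set (Fin n → ℝ)) (X₂ : Set (Fin m → ℝ))
    (ψ₁ : (Fin n → ℝ) → (Fin m → ℝ)) (ψ₂ : (Fin m → ℝ) → (Fin o → ℝ))
    (hrange : ψ₁ '' X₁ ⊆ X₂)
    (h₁ : MILPRepresentable X₁ ψ₁) (h₂ : MILPRepresentable X₂ ψ₂) :
    MILPRepresentable X₁ (ψ₂ ∘ ψ₁) := by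
  obtain ⟨c₁, b₁, k₁, M₁, d₁, H₁⟩ := h₁
  obtain ⟨c₂, b₂, k₂, M₂, d₂, H₂⟩ := h₂
  obtain ⟨k, M, d, hM⟩ := exists_composite_constraints M₁ d₁ M₂ d₂
  refine ⟨m + c₁ + c₂, b₁ + b₂, k, M, d, fun x hx u => ?_⟩
  refine (eq_comp_iff_exists_of_eq_iff H₁ H₂ hrange hx u).trans ?_
  simp only [Fin.exists_iff_exists_append, Fin.forall_fin_add, Fin.append_left,
    Fin.append_right, hM]
  constructor
  · rintro ⟨y, ⟨z₁, β₁, hβ₁, hS₁⟩, ⟨z₂, β₂, hβ₂, hS₂⟩⟩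
    exact ⟨y, z₁, z₂, β₁, β₂, ⟨hβ₁, hβ₂⟩, hS₁, hS₂⟩
  · rintro ⟨y, z₁, z₂, β₁, β₂, ⟨hβ₁, hβ₂⟩, hS₁, hS₂⟩
    exact ⟨y, ⟨z₁, β₁, hβ₁, hS₁⟩, ⟨z₂, β₂, hβ₂, hS₂⟩⟩
end

section
/- Let x̲, x̄, x, u ∈ ℝ with x̲ ≤ x ≤ x̄. Then u = max(0, x) if and only if there exists β ∈ {0, 1} such that u ≥ 0, u ≥ x, u ≤ x − x̲·(1 − β), and u ≤ x̄·β. -/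
/-- Mixed-integer linear representation of the graph of a single ReLU neuron
`u = max 0 x` on the interval `[x̲, x̄]`, with a binary variable `β` indicating whether
the neuron is active (`u = x`) or inactive (`u = 0`). -/
theorem relu_big_M_representation (xlo xhi x u : ℝ) (hlo : xlo ≤ x) (hhi : x ≤ xhi) :
    u = max 0 x ↔
      ∃ β : ℝ, (β = 0 ∨ β = 1) ∧
        0 ≤ u ∧ x ≤ u ∧ u ≤ x - xlo * (1 - β) ∧ u ≤ xhi * β := by
  constructor
  · rintro rfl
    rcases le_or_gt x 0 with h | h
    · refine ⟨0, Or.inl rfl, ?_, ?_, ?_, ?_⟩ <;> simp [max_eq_left h] <;> linarith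
    · refine ⟨1, Or.inr rfl, ?_, ?_, ?_, ?_⟩ <;> simp [max_eq_right h.le] <;> linarith
  · rintro ⟨β, (rfl | rfl), h0, hx, h1, h2⟩
    · simp at h1 h2
      have : u = 0 := le_antisymm h2 h0
      subst this
      exact (max_eq_left (by linarith)).symm
    · simp at h1 h2
      have : u = x := le_antisymm h1 hx
      subst this
      exact (max_eq_right (by linarith)).symm
end

section
/- Let X ⊆ ℝⁿ be a compact polyhedron and let ψ : X → ℝᵐ be a fully-connected feed-forward ReLU neural network, i.e., ψ(x) = W_ℓ z_{ℓ−1} + b_ℓ where z₀ = x and z_i = max(0, W_i z_{i−1} + b_i) componentwise for i = 1, …, ℓ−1, with weight matrices W_i and bias vectors b_i. Then ψ is MILP representable. -/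
/-- A subset of `ℝⁿ` is a polyhedron if it is the solution set of finitely many linear
inequalities. -/
def IsPolyhedron {n : ℕ} (X : Set (Fin n → ℝ)) : Prop :=
  ∃ (k : ℕ) (C : Matrix (Fin k) (Fin n) ℝ) (d : Fin k → ℝ),
    X = {x | C.mulVec x ≤ d}

/-- The hidden part of a fully-connected feed-forward ReLU neural network: `nnHidden W b k x`
is the output of the first `k` hidden layers (each an affine map followed by a
componentwise ReLU) applied to the input `x`. -/
def nnHidden {dims : ℕ → ℕ}
    (W : ∀ i : ℕ, Matrix (Fin (dims (i + 1))) (Fin (dims i)) ℝ)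
    (b : ∀ i : ℕ, Fin (dims (i + 1)) → ℝ) :
    ∀ k : ℕ, (Fin (dims 0) → ℝ) → (Fin (dims k) → ℝ)
  | 0 => fun x => x
  | (k + 1) => fun x j => max 0 ((W k).mulVec (nnHidden W b k x) j + b k j)

/-! ReLU networks are built from affine maps and the componentwise ReLU. An affine map is cut out
by two opposite inequalities, and on inputs bounded by `M` the relation `u = max 0 y` is the
big-M system `0 ≤ u`, `y ≤ u`, `u ≤ y + M (1 - γ)`, `u ≤ M γ` with one binary `γ` per coordinate.
Representations compose by adding the intermediate value as continuous variables. Since the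
network is continuous and `X` is compact, the input of every layer ranges over a bounded set. -/

open Matrix

/-- `MILPRepresentable` with auxiliary variables and constraints indexed by arbitrary finite
types and the constraint matrix split into column blocks, a form closed under composition. -/
def BlockMILPRepresentable {α μ : Type} [Fintype α] [Fintype μ] (X : Set (α → ℝ))
    (ψ : (α → ℝ) → μ → ℝ) : Prop :=
  ∃ (ι κ ρ : Type) (_ : Fintype ι) (_ : Fintype κ) (_ : Fintype ρ)
    (A : Matrix ρ α ℝ) (B : Matrix ρ μ ℝ) (C : Matrix ρ ι ℝ) (D : Matrix ρ κ ℝ) (d : ρ → ℝ),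
    ∀ x ∈ X, ∀ u, u = ψ x ↔ ∃ (z : ι → ℝ) (β : κ → ℝ),
      (∀ j, β j = 0 ∨ β j = 1) ∧ A *ᵥ x + B *ᵥ u + C *ᵥ z + D *ᵥ β ≤ d

namespace BlockMILPRepresentable

variable {α μ ν : Type} [Fintype α] [Fintype μ] [Fintype ν]

theorem comp {X : Set (α → ℝ)} {ψ : (α → ℝ) → μ → ℝ} {g : (μ → ℝ) → ν → ℝ}
    (hg : BlockMILPRepresentable (ψ '' X) g) (hψ : BlockMILPRepresentable X ψ) :
    BlockMILPRepresentable X (fun x => g (ψ x)) := by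
  obtain ⟨ι₁, κ₁, ρ₁, _, _, _, A₁, B₁, C₁, D₁, d₁, hψ⟩ := hψ
  obtain ⟨ι₂, κ₂, ρ₂, _, _, _, A₂, B₂, C₂, D₂, d₂, hg⟩ := hg
  refine ⟨μ ⊕ ι₁ ⊕ ι₂, κ₁ ⊕ κ₂, ρ₁ ⊕ ρ₂, inferInstance, inferInstance, inferInstance,
    fromRows A₁ 0, fromRows 0 B₂,
    fromRows (fromCols B₁ (fromCols C₁ 0)) (fromCols A₂ (fromCols 0 C₂)),
    fromRows (fromCols D₁ 0) (fromCols 0 D₂), Sum.elim d₁ d₂, fun x hx u => ?_⟩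
  simp only [fromRows_mulVec, fromCols_mulVec, zero_mulVec, add_zero, zero_add, ← Sum.elim_add_add,
    Sum.elim_le_elim_iff]
  constructor
  · rintro rfl
    obtain ⟨z₁, β₁, hβ₁, h₁⟩ := (hψ x hx _).1 rfl
    obtain ⟨z₂, β₂, hβ₂, h₂⟩ := (hg _ (Set.mem_image_of_mem ψ hx) _).1 rfl
    refine ⟨Sum.elim (ψ x) (Sum.elim z₁ z₂), Sum.elim β₁ β₂, Sum.forall.2 ⟨hβ₁, hβ₂⟩, ?_, ?_⟩
    · simpa only [Sum.elim_comp_inl, Sum.elim_comp_inr, ← add_assoc] using h₁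
    · refine le_of_eq_of_le ?_ h₂
      simp only [Sum.elim_comp_inl, Sum.elim_comp_inr]
      abel
  · rintro ⟨z, β, hβ, h₁, h₂⟩
    have hv : z ∘ Sum.inl = ψ x :=
      (hψ x hx _).2 ⟨(z ∘ Sum.inr) ∘ Sum.inl, β ∘ Sum.inl, fun j => hβ _,
        by simpa only [← add_assoc] using h₁⟩
    rw [← hv]
    exact (hg _ (hv ▸ Set.mem_image_of_mem ψ hx) u).2
      ⟨(z ∘ Sum.inr) ∘ Sum.inr, β ∘ Sum.inr, fun j => hβ _, le_of_eq_of_le (by abel) h₂⟩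

theorem milpRepresentable {n m : ℕ} {X : Set (Fin n → ℝ)}
    {ψ : (Fin n → ℝ) → Fin m → ℝ} (h : BlockMILPRepresentable X ψ) : MILPRepresentable X ψ := by
  obtain ⟨ι, κ, ρ, _, _, _, A, B, C, D, d, h⟩ := h
  let eι := Fintype.equivFin ι
  let eκ := Fintype.equivFin κ
  let eρ := Fintype.equivFin ρ
  let M : Matrix (Fin (Fintype.card ρ)) (Fin (n + m + Fintype.card ι + Fintype.card κ)) ℝ :=
    of fun r => Fin.append (Fin.append (Fin.append (A (eρ.symm r)) (B (eρ.symm r)))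
      (C (eρ.symm r) ∘ eι.symm)) (D (eρ.symm r) ∘ eκ.symm)
  have hM (x u) (z : ι → ℝ) (β : κ → ℝ) :
      M *ᵥ Fin.append (Fin.append (Fin.append x u) (z ∘ eι.symm)) (β ∘ eκ.symm) =
        (A *ᵥ x + B *ᵥ u + C *ᵥ z + D *ᵥ β) ∘ eρ.symm := by
    ext r
    simp only [M, mulVec, dotProduct, of_apply, Fin.sum_univ_add, Fin.append_left, Fin.append_right,
      Function.comp_apply, Pi.add_apply]
    rw [eι.symm.sum_comp (fun j => C (eρ.symm r) j * z j),
      eκ.symm.sum_comp (fun j => D (eρ.symm r) j * β j)]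
  have hle (v : ρ → ℝ) : v ∘ eρ.symm ≤ d ∘ eρ.symm ↔ v ≤ d :=
    eρ.symm.forall_congr_right (q := fun i => v i ≤ d i)
  refine ⟨_, _, _, M, d ∘ eρ.symm, fun x hx u => (h x hx u).trans ⟨?_, ?_⟩⟩
  · rintro ⟨z, β, hβ, hz⟩
    exact ⟨z ∘ eι.symm, β ∘ eκ.symm, fun j => hβ _, by rwa [hM, hle]⟩
  · rintro ⟨z, β, hβ, hz⟩
    have hM' := hM x u (z ∘ eι) (β ∘ eκ)
    simp only [Function.comp_assoc, Equiv.self_comp_symm, Function.comp_id] at hM'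
    exact ⟨z ∘ eι, β ∘ eκ, fun j => hβ _, by rwa [← hle, ← hM']⟩

end BlockMILPRepresentable

variable {α μ : Type} [Fintype α] [Fintype μ]

theorem blockMILPRepresentable_affine (X : Set (α → ℝ)) (A : Matrix μ α ℝ) (c : μ → ℝ) :
    BlockMILPRepresentable X (fun x => A *ᵥ x + c) := by
  classical
  refine ⟨Empty, Empty, μ ⊕ μ, inferInstance, inferInstance, inferInstance,
    fromRows A (-A), fromRows (-1) 1, 0, 0, Sum.elim (-c) c, fun x _ u => ?_⟩
  simp only [fromRows_mulVec, zero_mulVec, add_zero, ← Sum.elim_add_add, Sum.elim_le_elim_iff,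
    IsEmpty.forall_iff, true_and, exists_const, neg_mulVec, one_mulVec]
  simp only [funext_iff, Pi.le_def, Pi.add_apply, Pi.neg_apply, ← forall_and]
  exact forall_congr' fun j =>
    ⟨fun h => ⟨by linarith, by linarith⟩, fun h => by linarith [h.1, h.2]⟩

theorem eq_max_zero_iff_of_abs_le {y u M : ℝ} (hy : |y| ≤ M) :
    u = max 0 y ↔ ∃ γ : ℝ, (γ = 0 ∨ γ = 1) ∧
      -u ≤ 0 ∧ y - u ≤ 0 ∧ -y + u + M * γ ≤ M ∧ u - M * γ ≤ 0 := by
  obtain ⟨hMy, hyM⟩ := abs_le.1 hy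
  constructor
  · rintro rfl
    rcases le_total 0 y with h | h
    · refine ⟨1, Or.inr rfl, ?_⟩
      rw [max_eq_right h]
      refine ⟨?_, ?_, ?_, ?_⟩ <;> linarith
    · refine ⟨0, Or.inl rfl, ?_⟩
      rw [max_eq_left h]
      refine ⟨?_, ?_, ?_, ?_⟩ <;> linarith
  · rintro ⟨γ, rfl | rfl, h₁, h₂, h₃, h₄⟩
    · rw [max_eq_left (by linarith)]; linarith
    · rw [max_eq_right (by linarith)]; linarith

theorem blockMILPRepresentable_relu {Y : Set (μ → ℝ)} (hY : Bornology.IsBounded Y) :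
    BlockMILPRepresentable Y (fun y j => max 0 (y j)) := by
  classical
  obtain ⟨M, hM⟩ := isBounded_iff_forall_norm_le.1 hY
  refine ⟨Empty, μ, μ ⊕ μ ⊕ μ ⊕ μ, inferInstance, inferInstance, inferInstance,
    fromRows 0 (fromRows 1 (fromRows (-1) 0)), fromRows (-1) (fromRows (-1) (fromRows 1 1)), 0,
    fromRows 0 (fromRows 0 (fromRows (M • 1) (-(M • 1)))),
    Sum.elim 0 (Sum.elim 0 (Sum.elim (fun _ => M) 0)), fun y hy u => ?_⟩
  have hyM (j : μ) : |y j| ≤ M := (Real.norm_eq_abs _ ▸ norm_le_pi_norm y j).trans (hM y hy)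
  calc u = _ ↔ ∀ j, u j = max 0 (y j) := funext_iff
  _ ↔ ∀ j, ∃ γ : ℝ, (γ = 0 ∨ γ = 1) ∧
      -u j ≤ 0 ∧ y j - u j ≤ 0 ∧ -y j + u j + M * γ ≤ M ∧ u j - M * γ ≤ 0 :=
    forall_congr' fun j => eq_max_zero_iff_of_abs_le (hyM j)
  _ ↔ ∃ γ : μ → ℝ, ∀ j, (γ j = 0 ∨ γ j = 1) ∧
      -u j ≤ 0 ∧ y j - u j ≤ 0 ∧ -y j + u j + M * γ j ≤ M ∧ u j - M * γ j ≤ 0 := Classical.skolem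
  _ ↔ _ := by
    simp only [fromRows_mulVec, zero_mulVec, add_zero, zero_add, ← Sum.elim_add_add,
      Sum.elim_le_elim_iff, exists_const, neg_mulVec, one_mulVec, smul_mulVec]
    simp only [Pi.le_def, Pi.add_apply, Pi.neg_apply, Pi.smul_apply, Pi.sub_apply,
      Pi.zero_apply, smul_eq_mul, ← sub_eq_add_neg, forall_and]

theorem continuous_nnHidden {dims : ℕ → ℕ}
    (W : ∀ i : ℕ, Matrix (Fin (dims (i + 1))) (Fin (dims i)) ℝ)
    (b : ∀ i : ℕ, Fin (dims (i + 1)) → ℝ) : ∀ k, Continuous (nnHidden W b k)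
  | 0 => continuous_id
  | k + 1 => continuous_pi fun j => continuous_const.max
      (((continuous_apply j).comp (continuous_const.matrix_mulVec (continuous_nnHidden W b k))).add
        continuous_const)

theorem blockMILPRepresentable_nnHidden {dims : ℕ → ℕ}
    (W : ∀ i : ℕ, Matrix (Fin (dims (i + 1))) (Fin (dims i)) ℝ)
    (b : ∀ i : ℕ, Fin (dims (i + 1)) → ℝ) {X : Set (Fin (dims 0) → ℝ)} (hX : IsCompact X) :
    ∀ k, BlockMILPRepresentable X (nnHidden W b k)
  | 0 => by
    change BlockMILPRepresentable X fun x => x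
    simpa using blockMILPRepresentable_affine X (1 : Matrix (Fin (dims 0)) (Fin (dims 0)) ℝ) 0
  | k + 1 =>
    have hpre : Continuous fun x => W k *ᵥ nnHidden W b k x + b k :=
      (continuous_const.matrix_mulVec (continuous_nnHidden W b k)).add continuous_const
    (blockMILPRepresentable_relu (hX.image hpre).isBounded).comp
      ((blockMILPRepresentable_affine _ (W k) (b k)).comp
        (blockMILPRepresentable_nnHidden W b hX k))

theorem relu_network_MILP_representable_general (L : ℕ) (dims : ℕ → ℕ)
    (W : ∀ i : ℕ, Matrix (Fin (dims (i + 1))) (Fin (dims i)) ℝ)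
    (b : ∀ i : ℕ, Fin (dims (i + 1)) → ℝ)
    (X : Set (Fin (dims 0) → ℝ)) (hXc : IsCompact X) :
    MILPRepresentable X (fun x => (W L).mulVec (nnHidden W b L x) + b L) :=
  ((blockMILPRepresentable_affine _ (W L) (b L)).comp
    (blockMILPRepresentable_nnHidden W b hXc L)).milpRepresentable

/-- A fully-connected feed-forward ReLU neural network (with `L` hidden ReLU layers and a
final affine layer, i.e. `ℓ = L + 1 ≥ 1` layers in total) on a compact polyhedron is MILP
representable. -/
theorem relu_network_MILP_representable (L : ℕ) (dims : ℕ → ℕ)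
    (W : ∀ i : ℕ, Matrix (Fin (dims (i + 1))) (Fin (dims i)) ℝ)
    (b : ∀ i : ℕ, Fin (dims (i + 1)) → ℝ)
    (X : Set (Fin (dims 0) → ℝ)) (hXc : IsCompact X) (hXp : IsPolyhedron X) :
    MILPRepresentable X (fun x => (W L).mulVec (nnHidden W b L x) + b L) :=
  relu_network_MILP_representable_general L dims W b X hXc
end

section
/- Let T > 0 and t, z ∈ ℝ with |t| ≤ T. Then there exists β ∈ {0, 1} such that t ≤ z ≤ t + 2Tβ and −t ≤ z ≤ −t + 2T(1 − β) if and only if z = |t|. -/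
/-- Mixed-integer linear encoding of the absolute value `z = |t|` of a bounded scalar `t`
using a single binary variable `β`. -/
theorem abs_big_M_representation (T t z : ℝ) (hT : 0 < T) (ht : |t| ≤ T) :
    (∃ β : ℝ, (β = 0 ∨ β = 1) ∧
        t ≤ z ∧ z ≤ t + 2 * T * β ∧ -t ≤ z ∧ z ≤ -t + 2 * T * (1 - β)) ↔
      z = |t| := by
  constructor
  · rintro ⟨β, (rfl | rfl), h1, h2, h3, h4⟩
    · have hz : z = t := le_antisymm (by linarith) h1
      have : 0 ≤ t := by linarith
      rw [hz, abs_of_nonneg this]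
    · have hz : z = -t := le_antisymm (by linarith) h3
      have : t ≤ 0 := by linarith
      rw [hz, abs_of_nonpos this]
  · rintro rfl
    rcases le_or_gt 0 t with h | h
    · refine ⟨0, Or.inl rfl, ?_, ?_, ?_, ?_⟩ <;>
        rw [abs_of_nonneg h] <;> nlinarith [le_abs_self t]
    · refine ⟨1, Or.inr rfl, ?_, ?_, ?_, ?_⟩ <;>
        rw [abs_of_neg h] <;> nlinarith [neg_abs_le t, abs_of_neg h]
end

section
/- Let X ⊆ ℝⁿ be a compact polytope, let f : X → ℝᵐ be continuous, and let ε > 0. Then there exists an MILP representable function g : X → ℝᵐ such that sup_{x ∈ X} ‖f(x) − g(x)‖_∞ ≤ ε; that is, the MILP representable functions are dense in the continuous functions on X with respect to the supremum norm. -/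
namespace MILPAux

open Matrix Metric

lemma dot_append {p q : ℕ} (a c : Fin p → ℝ) (b d : Fin q → ℝ) :
    Fin.append a b ⬝ᵥ Fin.append c d = a ⬝ᵥ c + b ⬝ᵥ d := by
  simp [dotProduct, Fin.sum_univ_add]

lemma dot4 {n m c b : ℕ} (a x : Fin n → ℝ) (e u : Fin m → ℝ) (zz z : Fin c → ℝ)
    (bb β : Fin b → ℝ) :
    (Fin.append (Fin.append (Fin.append a e) zz) bb) ⬝ᵥ
      (Fin.append (Fin.append (Fin.append x u) z) β)
      = a ⬝ᵥ x + e ⬝ᵥ u + zz ⬝ᵥ z + bb ⬝ᵥ β := by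
  simp [dot_append]

lemma ite_dot {N : ℕ} (j : Fin N) (c : ℝ) (v : Fin N → ℝ) :
    (fun s => if s = j then c else 0) ⬝ᵥ v = c * v j := by
  simp [dotProduct, ite_mul, zero_mul, Finset.sum_ite_eq']

lemma ofPieces {n m : ℕ} (X : Set (Fin n → ℝ)) (g : (Fin n → ℝ) → Fin m → ℝ)
    (T : Type) (ι : Type) [Fintype T] [Fintype ι] [Nonempty T]
    (a : T → ι → Fin n → ℝ) (e : T → ι → Fin m → ℝ) (d : T → ι → ℝ) (BM : ℝ)
    (hcover : ∀ x ∈ X, ∃ t, ∀ i, a t i ⬝ᵥ x + e t i ⬝ᵥ g x ≤ d t i)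
    (hsingle : ∀ x ∈ X, ∀ t, ∀ u, (∀ i, a t i ⬝ᵥ x + e t i ⬝ᵥ u ≤ d t i) → u = g x)
    (hBM : ∀ x ∈ X, ∀ t i, a t i ⬝ᵥ x + e t i ⬝ᵥ g x ≤ d t i + BM) :
    MILPRepresentable X g := by
  classical
  set N := Fintype.card T with hN
  let eT : T ≃ Fin N := Fintype.equivFin T
  let ιA := (T × ι) ⊕ Bool
  let E : Fin (Fintype.card ιA) ≃ ιA := (Fintype.equivFin ιA).symm
  let row : ιA → (Fin (n + m + 0 + N) → ℝ) := fun c =>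
    match c with
    | .inl (t, i) => Fin.append (Fin.append (Fin.append (a t i) (e t i)) 0)
        (fun s => if s = eT t then BM else 0)
    | .inr true => Fin.append (Fin.append (Fin.append 0 0) 0) (fun _ => 1)
    | .inr false => Fin.append (Fin.append (Fin.append 0 0) 0) (fun _ => -1)
  let dv : ιA → ℝ := fun c =>
    match c with
    | .inl (t, i) => d t i + BM
    | .inr true => 1
    | .inr false => -1
  let Mat : Matrix (Fin (Fintype.card ιA)) (Fin (n + m + 0 + N)) ℝ :=
    Matrix.of fun i => row (E i)
  refine ⟨0, N, Fintype.card ιA, Mat, fun i => dv (E i), ?_⟩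
  intro x hx u
  have key : ∀ (z : Fin 0 → ℝ) (β : Fin N → ℝ),
      Mat.mulVec (Fin.append (Fin.append (Fin.append x u) z) β) ≤ (fun i => dv (E i))
      ↔ ∀ c : ιA, row c ⬝ᵥ (Fin.append (Fin.append (Fin.append x u) z) β) ≤ dv c := by
    intro z β
    constructor
    · intro h c
      have := h (E.symm c)
      simpa [Mat, Matrix.mulVec, E.apply_symm_apply] using this
    · intro h i
      simpa [Mat, Matrix.mulVec] using h (E i)
  constructor
  · rintro rfl
    obtain ⟨t₀, ht₀⟩ := hcover x hx
    refine ⟨0, fun s => if s = eT t₀ then 1 else 0,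
      fun s => by by_cases h : s = eT t₀ <;> simp [h], ?_⟩
    rw [key]
    rintro (⟨t, i⟩ | b)
    · show _ ⬝ᵥ _ ≤ d t i + BM
      rw [dot4, ite_dot, zero_dotProduct]
      by_cases h : t = t₀
      · subst h
        rw [if_pos rfl]
        have := ht₀ i
        linarith
      · have hne : eT t ≠ eT t₀ := fun hc => h (eT.injective hc)
        rw [if_neg hne]
        have := hBM x hx t i
        linarith
    · cases b
      · show _ ⬝ᵥ _ ≤ (-1 : ℝ)
        rw [dot4, zero_dotProduct, zero_dotProduct, zero_dotProduct]
        have : (fun _ : Fin N => (-1:ℝ)) ⬝ᵥ (fun s => if s = eT t₀ then (1:ℝ) else 0)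
            = -1 := by
          simp [dotProduct, Finset.sum_ite_eq']
        rw [this]; norm_num
      · show _ ⬝ᵥ _ ≤ (1 : ℝ)
        rw [dot4, zero_dotProduct, zero_dotProduct, zero_dotProduct]
        have : (fun _ : Fin N => (1:ℝ)) ⬝ᵥ (fun s => if s = eT t₀ then (1:ℝ) else 0)
            = 1 := by
          simp [dotProduct, Finset.sum_ite_eq']
        rw [this]; norm_num
  · rintro ⟨z, β, hβ, hrows⟩
    rw [key] at hrows
    have hsum1 : (1:ℝ) ≤ ∑ s, β s := by
      have h1 := hrows (.inr false)
      show (1:ℝ) ≤ ∑ s, β s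
      have : row (.inr false) ⬝ᵥ (Fin.append (Fin.append (Fin.append x u) z) β)
          = -(∑ s, β s) := by
        show (Fin.append (Fin.append (Fin.append 0 0) 0) (fun _ => (-1:ℝ))) ⬝ᵥ _ = _
        rw [dot4, zero_dotProduct, zero_dotProduct, zero_dotProduct]
        simp [dotProduct, Finset.sum_neg_distrib]
      rw [this] at h1
      have hdv : dv (.inr false) = -1 := rfl
      rw [hdv] at h1
      linarith
    have hex : ∃ s, β s = 1 := by
      by_contra hc
      push_neg at hc
      have hz : ∀ s, β s = 0 := fun s => (hβ s).resolve_right (hc s)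
      rw [Finset.sum_congr rfl (fun s _ => hz s)] at hsum1
      simp at hsum1
      linarith
    obtain ⟨s, hs⟩ := hex
    refine hsingle x hx (eT.symm s) u (fun i => ?_)
    have h2 := hrows (.inl (eT.symm s, i))
    have hrw : row (.inl (eT.symm s, i)) ⬝ᵥ (Fin.append (Fin.append (Fin.append x u) z) β)
        = a (eT.symm s) i ⬝ᵥ x + e (eT.symm s) i ⬝ᵥ u + BM := by
      show (Fin.append (Fin.append (Fin.append _ _) 0)
        (fun s' => if s' = eT (eT.symm s) then BM else 0)) ⬝ᵥ _ = _
      rw [dot4, ite_dot, zero_dotProduct, eT.apply_symm_apply, hs]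
      ring
    rw [hrw] at h2
    have hdv : dv (.inl (eT.symm s, i)) = d (eT.symm s) i + BM := rfl
    rw [hdv] at h2
    linarith

noncomputable def sg (b : Bool) : ℝ := if b then 1 else -1

lemma sg_mul_le (b : Bool) (w : ℝ) : sg b * w ≤ |w| := by
  cases b <;> simp [sg] <;> [exact neg_le_abs w; exact le_abs_self w]

lemma sg_best (w : ℝ) : sg (decide (0 ≤ w)) * w = |w| := by
  by_cases h : 0 ≤ w
  · simp [sg, h, abs_of_nonneg h]
  · simp [sg, h, abs_of_neg (lt_of_not_ge h)]

lemma abs_sg (b : Bool) : |sg b| = 1 := by cases b <;> simp [sg]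

lemma g_repr {n m : ℕ} (X : Set (Fin n → ℝ)) (f : (Fin n → ℝ) → Fin m → ℝ)
    (P : Finset (Fin n → ℝ)) (hPne : P.Nonempty) (L : ℝ) (hL : 0 ≤ L)
    (R C : ℝ) (hR : ∀ x ∈ X, ∀ i, |x i| ≤ R) (hRP : ∀ p ∈ P, ∀ i, |p i| ≤ R)
    (hC : ∀ p ∈ P, ∀ j, |f p j| ≤ C) :
    MILPRepresentable X
      (fun x j => P.inf' hPne (fun p => f p j + L * ∑ i, |x i - p i|)) := by
  classical
  set vfun : Fin m → (Fin n → ℝ) → (Fin n → ℝ) → ℝ :=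
    fun j p x => f p j + L * ∑ i, |x i - p i| with hvfun
  set g : (Fin n → ℝ) → Fin m → ℝ := fun x j => P.inf' hPne (fun p => vfun j p x) with hg
  show MILPRepresentable X g
  -- affine pieces
  set ssum : (Fin n → Bool) → (Fin n → ℝ) → (Fin n → ℝ) → ℝ :=
    fun s p x => ∑ i, sg (s i) * (x i - p i) with hssum
  set affval : (Fin n → ℝ) → (Fin n → Bool) → Fin m → (Fin n → ℝ) → ℝ :=
    fun p s j x => f p j + L * ssum s p x with haffval
  set avec : (Fin n → Bool) → (Fin n → ℝ) := fun s i => L * sg (s i) with havec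
  set cstv : (Fin n → ℝ) → (Fin n → Bool) → Fin m → ℝ :=
    fun p s j => f p j - L * ∑ i, sg (s i) * p i with hcstv
  have hdot : ∀ (s : Fin n → Bool) (p : Fin n → ℝ) (j : Fin m) (x : Fin n → ℝ),
      avec s ⬝ᵥ x + cstv p s j = affval p s j x := by
    intro s p j x
    simp only [dotProduct, havec, hcstv, haffval, hssum, mul_sub, Finset.sum_sub_distrib,
      Finset.mul_sum]
    ring_nf
  -- ssum facts
  have hssum_le : ∀ (s : Fin n → Bool) (p x : Fin n → ℝ),
      ssum s p x ≤ ∑ i, |x i - p i| :=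
    fun s p x => Finset.sum_le_sum fun i _ => sg_mul_le (s i) (x i - p i)
  have hssum_best : ∀ (p x : Fin n → ℝ),
      ssum (fun i => decide (0 ≤ x i - p i)) p x = ∑ i, |x i - p i| :=
    fun p x => Finset.sum_congr rfl fun i _ => sg_best (x i - p i)
  have hmax : ∀ (s : Fin n → Bool) (p x : Fin n → ℝ),
      (∀ s', ssum s' p x ≤ ssum s p x) → ssum s p x = ∑ i, |x i - p i| := by
    intro s p x h
    refine le_antisymm (hssum_le s p x) ?_
    rw [← hssum_best p x]; exact h _
  have haff_best : ∀ (p x : Fin n → ℝ) (j : Fin m),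
      affval p (fun i => decide (0 ≤ x i - p i)) j x = vfun j p x := by
    intro p x j
    simp only [haffval, hvfun, hssum_best]
  -- bounds
  set B : ℝ := C + L * (2 * n * R) with hB
  have haffb : ∀ x ∈ X, ∀ p ∈ P, ∀ (s : Fin n → Bool) (j : Fin m),
      |affval p s j x| ≤ B := by
    intro x hx p hp s j
    have h1 : |ssum s p x| ≤ ∑ i, |x i - p i| := by
      calc |ssum s p x| ≤ ∑ i, |sg (s i) * (x i - p i)| :=
            Finset.abs_sum_le_sum_abs _ _
      _ = ∑ i, |x i - p i| := Finset.sum_congr rfl fun i _ => by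
            rw [abs_mul, abs_sg, one_mul]
    have h2 : ∑ i, |x i - p i| ≤ 2 * n * R := by
      calc ∑ i, |x i - p i| ≤ ∑ i : Fin n, (|x i| + |p i|) :=
            Finset.sum_le_sum fun i _ => abs_sub (x i) (p i)
      _ ≤ ∑ _i : Fin n, (R + R) :=
            Finset.sum_le_sum fun i _ => add_le_add (hR x hx i) (hRP p hp i)
      _ = 2 * n * R := by simp [Finset.sum_const]; ring
    have h3 : |f p j| ≤ C := hC p hp j
    have h4 : |affval p s j x| ≤ |f p j| + L * |ssum s p x| := by
      calc |affval p s j x| ≤ |f p j| + |L * ssum s p x| := abs_add_le _ _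
      _ = |f p j| + L * |ssum s p x| := by rw [abs_mul, abs_of_nonneg hL]
    have h5 : L * |ssum s p x| ≤ L * (2 * n * R) :=
      mul_le_mul_of_nonneg_left (h1.trans h2) hL
    simp only [hB]; linarith
  have hgb : ∀ x ∈ X, ∀ j, |g x j| ≤ B := by
    intro x hx j
    obtain ⟨p, hp, hpeq⟩ := P.exists_mem_eq_inf' hPne (fun p => vfun j p x)
    have : g x j = affval p (fun i => decide (0 ≤ x i - p i)) j x := by
      rw [hg]; simp only; rw [hpeq, haff_best]
    rw [this]
    exact haffb x hx p hp _ j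
  -- index types
  set PT := {p // p ∈ P} with hPT
  haveI : Nonempty PT := ⟨⟨hPne.choose, hPne.choose_spec⟩⟩
  set T := (Fin m → PT) × (PT → Fin n → Bool) with hT
  set ι := (PT × (Fin n → Bool) × Fin m) ⊕ ((Fin m × PT) ⊕ (Fin m × Bool)) with hι
  -- constraints
  set aC : T → ι → Fin n → ℝ := fun t i =>
    match i with
    | .inl (q, s', j) => avec s' - avec (t.2 q)
    | .inr (.inl (j, q)) => avec (t.2 (t.1 j)) - avec (t.2 q)
    | .inr (.inr (j, true)) => -avec (t.2 (t.1 j))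
    | .inr (.inr (j, false)) => avec (t.2 (t.1 j)) with haC
  set eC : T → ι → Fin m → ℝ := fun t i =>
    match i with
    | .inl _ => 0
    | .inr (.inl _) => 0
    | .inr (.inr (j, true)) => Pi.single j 1
    | .inr (.inr (j, false)) => -Pi.single j 1 with heC
  set dC : T → ι → ℝ := fun t i =>
    match i with
    | .inl (q, s', j) => cstv q (t.2 q) j - cstv q s' j
    | .inr (.inl (j, q)) => cstv q (t.2 q) j - cstv (t.1 j) (t.2 (t.1 j)) j
    | .inr (.inr (j, true)) => cstv (t.1 j) (t.2 (t.1 j)) j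
    | .inr (.inr (j, false)) => -(cstv (t.1 j) (t.2 (t.1 j)) j) with hdC
  -- unfolding equalities
  have heqA : ∀ (s₁ s₂ : Fin n → Bool) (p₁ p₂ : Fin n → ℝ) (j₁ j₂ : Fin m)
      (x : Fin n → ℝ) (u : Fin m → ℝ),
      (avec s₁ - avec s₂) ⬝ᵥ x + (0 : Fin m → ℝ) ⬝ᵥ u
        - (cstv p₂ s₂ j₂ - cstv p₁ s₁ j₁)
        = affval p₁ s₁ j₁ x - affval p₂ s₂ j₂ x := by
    intro s₁ s₂ p₁ p₂ j₁ j₂ x u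
    rw [sub_dotProduct, zero_dotProduct, ← hdot s₁ p₁ j₁ x, ← hdot s₂ p₂ j₂ x]
    ring
  have heqB : ∀ (s : Fin n → Bool) (p : Fin n → ℝ) (j : Fin m)
      (x : Fin n → ℝ) (u : Fin m → ℝ),
      (-avec s) ⬝ᵥ x + (Pi.single j 1 : Fin m → ℝ) ⬝ᵥ u - cstv p s j
        = u j - affval p s j x := by
    intro s p j x u
    rw [neg_dotProduct, single_dotProduct, ← hdot s p j x]
    ring
  have heqC : ∀ (s : Fin n → Bool) (p : Fin n → ℝ) (j : Fin m)
      (x : Fin n → ℝ) (u : Fin m → ℝ),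
      (avec s) ⬝ᵥ x + (-(Pi.single j 1 : Fin m → ℝ)) ⬝ᵥ u - (-(cstv p s j))
        = affval p s j x - u j := by
    intro s p j x u
    rw [neg_dotProduct, single_dotProduct, ← hdot s p j x]
    ring
  refine ofPieces X g T ι aC eC dC (2 * B) ?_ ?_ ?_
  · -- hcover
    intro x hx
    set sbest : PT → Fin n → Bool := fun q i => decide (0 ≤ x i - q.1 i) with hsbest
    have hπ : ∀ j : Fin m, ∃ p ∈ P, P.inf' hPne (fun p => vfun j p x) = vfun j p x :=
      fun j => P.exists_mem_eq_inf' hPne (fun p => vfun j p x)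
    set π : Fin m → PT := fun j => ⟨(hπ j).choose, (hπ j).choose_spec.1⟩ with hπdef
    have hπeq : ∀ j, g x j = vfun j (π j).1 x := fun j => (hπ j).choose_spec.2
    refine ⟨(π, sbest), ?_⟩
    have hbest_aff : ∀ (q : PT) (j : Fin m), affval q.1 (sbest q) j x = vfun j q.1 x :=
      fun q j => haff_best q.1 x j
    rintro (⟨q, s', j⟩ | (⟨j, q⟩ | ⟨j, b⟩))
    · have h := heqA s' (sbest q) q.1 q.1 j j x (g x)
      have h2 : affval q.1 s' j x ≤ affval q.1 (sbest q) j x := by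
        rw [hbest_aff]
        simp only [haffval, hvfun]
        nlinarith [mul_le_mul_of_nonneg_left (hssum_le s' q.1 x) hL]
      show (avec s' - avec (sbest q)) ⬝ᵥ x + (0:Fin m → ℝ) ⬝ᵥ g x ≤
        cstv q.1 (sbest q) j - cstv q.1 s' j
      linarith [h, h2]
    · have h := heqA (sbest (π j)) (sbest q) (π j).1 q.1 j j x (g x)
      have h2 : affval (π j).1 (sbest (π j)) j x ≤ affval q.1 (sbest q) j x := by
        rw [hbest_aff, hbest_aff, ← hπeq j]
        exact Finset.inf'_le _ q.2
      show (avec (sbest (π j)) - avec (sbest q)) ⬝ᵥ x + (0:Fin m → ℝ) ⬝ᵥ g x ≤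
        cstv q.1 (sbest q) j - cstv (π j).1 (sbest (π j)) j
      linarith [h, h2]
    · cases b
      · have h := heqC (sbest (π j)) (π j).1 j x (g x)
        have h2 : affval (π j).1 (sbest (π j)) j x = g x j := by
          rw [hbest_aff, hπeq j]
        show (avec (sbest (π j))) ⬝ᵥ x + (-(Pi.single j 1 : Fin m → ℝ)) ⬝ᵥ g x ≤
          -(cstv (π j).1 (sbest (π j)) j)
        linarith [h, h2.le]
      · have h := heqB (sbest (π j)) (π j).1 j x (g x)
        have h2 : affval (π j).1 (sbest (π j)) j x = g x j := by
          rw [hbest_aff, hπeq j]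
        show (-avec (sbest (π j))) ⬝ᵥ x + (Pi.single j 1 : Fin m → ℝ) ⬝ᵥ g x ≤
          cstv (π j).1 (sbest (π j)) j
        linarith [h, h2.ge]
  · -- hsingle
    intro x hx t u hcons
    obtain ⟨π, s⟩ := t
    have hqmax : ∀ q : PT, ∀ j : Fin m, affval q.1 (s q) j x = vfun j q.1 x := by
      intro q j
      rcases eq_or_lt_of_le hL with hL0 | hLpos
      · simp only [haffval, hvfun, ← hL0, zero_mul, add_zero]
      · have hssum_eq : ssum (s q) q.1 x = ∑ i, |x i - q.1 i| := by
          refine hmax (s q) q.1 x fun s' => ?_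
          have h : (avec s' - avec (s q)) ⬝ᵥ x + (0:Fin m → ℝ) ⬝ᵥ u ≤
              cstv q.1 (s q) j - cstv q.1 s' j := hcons (.inl (q, s', j))
          have h2 := heqA s' (s q) q.1 q.1 j j x u
          have h3 : affval q.1 s' j x ≤ affval q.1 (s q) j x := by linarith [h, h2]
          simp only [haffval] at h3
          nlinarith [h3, hLpos]
        simp only [haffval, hvfun, hssum_eq]
    funext j
    have hmin : ∀ q : PT, vfun j (π j).1 x ≤ vfun j q.1 x := by
      intro q
      have h : (avec (s (π j)) - avec (s q)) ⬝ᵥ x + (0:Fin m → ℝ) ⬝ᵥ u ≤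
          cstv q.1 (s q) j - cstv (π j).1 (s (π j)) j := hcons (.inr (.inl (j, q)))
      have h2 := heqA (s (π j)) (s q) (π j).1 q.1 j j x u
      have h3 : affval (π j).1 (s (π j)) j x ≤ affval q.1 (s q) j x := by linarith [h, h2]
      rw [hqmax (π j) j, hqmax q j] at h3
      exact h3
    have hgeq : g x j = vfun j (π j).1 x := by
      refine le_antisymm (Finset.inf'_le _ (π j).2) (Finset.le_inf'_iff _ _ |>.mpr ?_)
      intro p hp
      exact hmin ⟨p, hp⟩
    have hub : (-avec (s (π j))) ⬝ᵥ x + (Pi.single j 1 : Fin m → ℝ) ⬝ᵥ u ≤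
        cstv (π j).1 (s (π j)) j := hcons (.inr (.inr (j, true)))
    have hlb : (avec (s (π j))) ⬝ᵥ x + (-(Pi.single j 1 : Fin m → ℝ)) ⬝ᵥ u ≤
        -(cstv (π j).1 (s (π j)) j) := hcons (.inr (.inr (j, false)))
    have h2 := heqB (s (π j)) (π j).1 j x u
    have h3 := heqC (s (π j)) (π j).1 j x u
    have h4 : u j = affval (π j).1 (s (π j)) j x := by linarith [hub, hlb, h2, h3]
    rw [h4, hqmax (π j) j, ← hgeq]
  · -- hBM
    intro x hx t i
    obtain ⟨π, s⟩ := t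
    have hb1 : ∀ (q : PT) (s' : Fin n → Bool) (j : Fin m), |affval q.1 s' j x| ≤ B :=
      fun q s' j => haffb x hx q.1 q.2 s' j
    have hb2 : ∀ j, |g x j| ≤ B := hgb x hx
    rcases i with (⟨q, s', j⟩ | (⟨j, q⟩ | ⟨j, b⟩))
    · have h := heqA s' (s q) q.1 q.1 j j x (g x)
      have := abs_le.mp (hb1 q s' j)
      have := abs_le.mp (hb1 q (s q) j)
      show (avec s' - avec (s q)) ⬝ᵥ x + (0:Fin m → ℝ) ⬝ᵥ g x ≤
        (cstv q.1 (s q) j - cstv q.1 s' j) + 2*B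
      linarith
    · have h := heqA (s (π j)) (s q) (π j).1 q.1 j j x (g x)
      have := abs_le.mp (hb1 (π j) (s (π j)) j)
      have := abs_le.mp (hb1 q (s q) j)
      show (avec (s (π j)) - avec (s q)) ⬝ᵥ x + (0:Fin m → ℝ) ⬝ᵥ g x ≤
        (cstv q.1 (s q) j - cstv (π j).1 (s (π j)) j) + 2*B
      linarith
    · cases b
      · have h := heqC (s (π j)) (π j).1 j x (g x)
        have := abs_le.mp (hb1 (π j) (s (π j)) j)
        have := abs_le.mp (hb2 j)
        show (avec (s (π j))) ⬝ᵥ x + (-(Pi.single j 1 : Fin m → ℝ)) ⬝ᵥ g x ≤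
          (-(cstv (π j).1 (s (π j)) j)) + 2*B
        linarith
      · have h := heqB (s (π j)) (π j).1 j x (g x)
        have := abs_le.mp (hb1 (π j) (s (π j)) j)
        have := abs_le.mp (hb2 j)
        show (-avec (s (π j))) ⬝ᵥ x + (Pi.single j 1 : Fin m → ℝ) ⬝ᵥ g x ≤
          (cstv (π j).1 (s (π j)) j) + 2*B
        linarith

end MILPAux

/-- MILP representable functions are dense (w.r.t. the supremum norm, the norm on
`Fin m → ℝ` being the infinity norm) in the continuous functions on a compact
polytope. -/
theorem MILP_representable_dense {n m : ℕ}
    (X : Set (Fin n → ℝ)) (hXc : IsCompact X) (hXp : IsPolyhedron X)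
    (f : (Fin n → ℝ) → (Fin m → ℝ)) (hf : ContinuousOn f X)
    (ε : ℝ) (hε : 0 < ε) :
    ∃ g : (Fin n → ℝ) → (Fin m → ℝ),
      MILPRepresentable X g ∧ ∀ x ∈ X, ‖f x - g x‖ ≤ ε := by
  classical
  rcases X.eq_empty_or_nonempty with hXe | ⟨x₀, hx₀⟩
  · refine ⟨f, ⟨0, 0, 0, 0, 0, fun x hx => ?_⟩,
      fun x hx => by rw [hXe] at hx; exact absurd hx (Set.notMem_empty x)⟩
    rw [hXe] at hx; exact absurd hx (Set.notMem_empty x)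
  -- bound on f
  obtain ⟨C₀, hC₀⟩ := hXc.exists_bound_of_continuousOn hf
  set C := max C₀ 0 with hC
  have hCnn : (0:ℝ) ≤ C := le_max_right _ _
  have hfb : ∀ x ∈ X, ∀ j, |f x j| ≤ C := by
    intro x hx j
    calc |f x j| ≤ ‖f x‖ := by simpa using norm_le_pi_norm (f x) j
    _ ≤ C₀ := hC₀ x hx
    _ ≤ C := le_max_left _ _
  -- uniform continuity
  obtain ⟨δ, hδpos, hδ⟩ : ∃ δ > 0, ∀ x ∈ X, ∀ y ∈ X, dist x y < δ →
      dist (f x) (f y) < ε/2 := by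
    have := hXc.uniformContinuousOn_of_continuous hf
    rw [Metric.uniformContinuousOn_iff] at this
    obtain ⟨δ, h1, h2⟩ := this (ε/2) (by linarith)
    exact ⟨δ, h1, fun x hx y hy hd => h2 x hx y hy hd⟩
  have hδf : ∀ x ∈ X, ∀ y ∈ X, dist x y < δ → ∀ j, |f x j - f y j| ≤ ε/2 := by
    intro x hx y hy hd j
    have h1 : |f x j - f y j| ≤ dist (f x) (f y) := by
      rw [← Real.dist_eq]; exact dist_le_pi_dist (f x) (f y) j
    linarith [hδ x hx y hy hd]
  set L := 2*C/δ with hLdef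
  have hL : 0 ≤ L := div_nonneg (by linarith) hδpos.le
  have hLδ : L * δ = 2*C := by rw [hLdef, div_mul_cancel₀]; exact hδpos.ne'
  set δ₂ := min (δ/2) (ε/(2*(L*n+1))) with hδ₂def
  have hLn1 : (0:ℝ) < L*n+1 := by positivity
  have hδ₂pos : 0 < δ₂ := lt_min (by linarith) (by positivity)
  -- finite net
  obtain ⟨net, hnetX, hnetf, hnet⟩ : ∃ t, t ⊆ X ∧ Set.Finite t ∧
      ∀ x ∈ X, ∃ p ∈ t, dist x p < δ₂ := by
    have := hXc.totallyBounded
    rw [totallyBounded_iff_subset] at this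
    obtain ⟨t, hts, htf, hcov⟩ := this _ (Metric.dist_mem_uniformity hδ₂pos)
    refine ⟨t, hts, htf, fun x hx => ?_⟩
    have := hcov hx
    simp only [Set.mem_iUnion] at this
    obtain ⟨p, hp, hxp⟩ := this
    exact ⟨p, hp, hxp⟩
  set P : Finset (Fin n → ℝ) := hnetf.toFinset with hPdef
  have hPX : ∀ p ∈ P, p ∈ X := by
    intro p hp; exact hnetX (by simpa [hPdef] using hp)
  have hPnet : ∀ x ∈ X, ∃ p ∈ P, dist x p < δ₂ := by
    intro x hx; obtain ⟨p, hp, h⟩ := hnet x hx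
    exact ⟨p, by simpa [hPdef] using hp, h⟩
  obtain ⟨p₀, hp₀, _⟩ := hPnet x₀ hx₀
  have hPne : P.Nonempty := ⟨p₀, hp₀⟩
  -- the approximant
  set val : Fin m → (Fin n → ℝ) → (Fin n → ℝ) → ℝ :=
    fun j p x => f p j + L * ∑ i, |x i - p i| with hvaldef
  set g : (Fin n → ℝ) → Fin m → ℝ :=
    fun x j => P.inf' hPne (fun p => val j p x) with hgdef
  have habs : ∀ (x p : Fin n → ℝ), (0:ℝ) ≤ ∑ i, |x i - p i| :=
    fun x p => Finset.sum_nonneg fun i _ => abs_nonneg _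
  have hl1_ge : ∀ (x p : Fin n → ℝ), dist x p ≤ ∑ i, |x i - p i| := by
    intro x p
    refine (dist_pi_le_iff (habs x p)).mpr fun i => ?_
    rw [Real.dist_eq]
    exact Finset.single_le_sum (f := fun i => |x i - p i|) (fun i _ => abs_nonneg _) (Finset.mem_univ i)
  have hl1_le : ∀ (x p : Fin n → ℝ), ∑ i, |x i - p i| ≤ n * dist x p := by
    intro x p
    calc ∑ i, |x i - p i| ≤ ∑ _i : Fin n, dist x p := by
          refine Finset.sum_le_sum fun i _ => ?_
          rw [← Real.dist_eq]; exact dist_le_pi_dist x p i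
    _ = n * dist x p := by simp [mul_comm]
  obtain ⟨R, hRn⟩ := isBounded_iff_forall_norm_le.mp hXc.isBounded
  have hRX : ∀ x ∈ X, ∀ i, |x i| ≤ R := by
    intro x hx i
    calc |x i| ≤ ‖x‖ := by simpa using norm_le_pi_norm x i
    _ ≤ R := hRn x hx
  have hrepr : MILPRepresentable X g := by
    rw [hgdef]
    exact MILPAux.g_repr X f P hPne L hL R C hRX
      (fun p hp i => hRX p (hPX p hp) i) (fun p hp j => hfb p (hPX p hp) j)
  refine ⟨g, hrepr, fun x hx => ?_⟩
  have hupper : ∀ j, g x j ≤ f x j + ε := by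
    intro j
    obtain ⟨p, hp, hdp⟩ := hPnet x hx
    have h1 : g x j ≤ val j p x := Finset.inf'_le _ hp
    have h2 : |f p j - f x j| ≤ ε/2 :=
      hδf p (hPX p hp) x hx (by rw [dist_comm]; exact hdp.trans_le ((min_le_left _ _).trans (by linarith))) j
    have h3 : ∑ i, |x i - p i| ≤ n * δ₂ := by
      calc ∑ i, |x i - p i| ≤ n * dist x p := hl1_le x p
      _ ≤ n * δ₂ := by
          exact mul_le_mul_of_nonneg_left hdp.le (Nat.cast_nonneg n)
    have h4 : L * (n * δ₂) ≤ ε/2 := by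
      have hd2 : δ₂ ≤ ε/(2*(L*n+1)) := min_le_right _ _
      have h5 : L * n * δ₂ ≤ L * n * (ε/(2*(L*n+1))) := by
        refine mul_le_mul_of_nonneg_left hd2 (by positivity)
      have h6 : L * n * (ε/(2*(L*n+1))) ≤ ε/2 := by
        have heq : L * ↑n * (ε/(2*(L*↑n+1))) = ε * (L*↑n) / (2*(L*↑n+1)) := by ring
        rw [heq, div_le_div_iff₀ (by positivity) (by norm_num)]
        nlinarith [hL, Nat.cast_nonneg (α := ℝ) n, hε]
      calc L * (n * δ₂) = L * n * δ₂ := by ring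
      _ ≤ ε/2 := h5.trans h6
    have h7 : val j p x ≤ f p j + L * (n * δ₂) := by
      have := mul_le_mul_of_nonneg_left h3 hL
      simp only [hvaldef]
      linarith
    have := abs_le.mp h2
    linarith
  have hlower : ∀ j, f x j - ε ≤ g x j := by
    intro j
    rw [hgdef]
    simp only [Finset.le_inf'_iff]
    intro p hp
    rcases lt_or_ge (dist x p) δ with hcase | hcase
    · have h2 : |f x j - f p j| ≤ ε/2 := hδf x hx p (hPX p hp) hcase j
      have := abs_le.mp h2
      have h3 : (0:ℝ) ≤ L * ∑ i, |x i - p i| := mul_nonneg hL (habs x p)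
      simp only [hvaldef]
      linarith
    · have h2 : δ ≤ ∑ i, |x i - p i| := hcase.trans (hl1_ge x p)
      have h3 : L * δ ≤ L * ∑ i, |x i - p i| := mul_le_mul_of_nonneg_left h2 hL
      have h4 : |f p j| ≤ C := hfb p (hPX p hp) j
      have h5 : |f x j| ≤ C := hfb x hx j
      have h6 := abs_le.mp h4
      have h7 := abs_le.mp h5
      simp only [hvaldef]
      nlinarith
  rw [show f x - g x = fun j => f x j - g x j from rfl]
  rw [pi_norm_le_iff_of_nonneg hε.le]
  intro j
  rw [Real.norm_eq_abs, abs_le]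
  constructor
  · linarith [hupper j]
  · linarith [hlower j]
end
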